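/- For the three-petal rose graph, the entropy-one condition det(A_{−l} − Id) = 0 for the 6×6 weighted adjacency matrix is equivalent to e^{−z} = (e^{x+y} − e^x − e^y − 3)/(e^{x+y} + 3e^x + 3e^y + 5), for x, y, z > 0 with e^{x+y} > e^x + e^y + 3. -/
import Mathlib


open Real

set_option maxRecDepth 8000
set_option maxHeartbeats 1000000

private lemma cons_val_five' {α : Type*} (x : α) (u : Fin 5 → α) :
    Matrix.vecCons x u 5 = u 4 := rfl

private lemma rose_detE : Matrix.det
    (!![1,0,0,-1,0,0; 0,1,0,0,-1,0; 0,0,1,0,0,-1; 0,0,0,1,0,0; 0,0,0,0,1,0; 0,0,0,0,0,1] :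
      Matrix (Fin 6) (Fin 6) ℝ) = 1 := by
  simp [Matrix.det_succ_row_zero, Fin.sum_univ_succ]

private lemma rose_detF : Matrix.det
    (!![1,0,0,1,0,0; 0,1,0,0,1,0; 0,0,1,0,0,1; 0,0,0,1,0,0; 0,0,0,0,1,0; 0,0,0,0,0,1] :
      Matrix (Fin 6) (Fin 6) ℝ) = 1 := by
  simp [Matrix.det_succ_row_zero, Fin.sum_univ_succ]

private lemma rose_detT (a b c : ℝ) : Matrix.det
    (!![a-1,0,0,0,0,0; 0,b-1,0,0,0,0; 0,0,c-1,0,0,0;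
       0,a,a,a-1,2*a,2*a; b,0,b,2*b,b-1,2*b; c,c,0,2*c,2*c,c-1] :
      Matrix (Fin 6) (Fin 6) ℝ) =
    -(((1 + 3*a + 3*b + 5*a*b) * c - (1 - a - b - 3*a*b)) * ((1-a)*(1-b)*(1-c))) := by
  simp [Matrix.det_succ_row_zero, Fin.sum_univ_succ]
  ring

private lemma rose_sub (a b c : ℝ) :
    (!![a, a, a, 0, a, a;
        b, b, b, b, 0, b;
        c, c, c, c, c, 0;
        0, a, a, a, a, a;
        b, 0, b, b, b, b;
        c, c, 0, c, c, c] - (1 : Matrix (Fin 6) (Fin 6) ℝ)) =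
    !![a-1, a, a, 0, a, a;
       b, b-1, b, b, 0, b;
       c, c, c-1, c, c, 0;
       0, a, a, a-1, a, a;
       b, 0, b, b, b-1, b;
       c, c, 0, c, c, c-1] := by
  ext i j
  fin_cases i <;> fin_cases j <;>
    simp [Matrix.sub_apply, Matrix.one_apply, cons_val_five', Matrix.vecHead, Matrix.vecTail,
      Fin.ext_iff] <;> decide

private lemma rose_prodEMF (a b c : ℝ) :
    (!![1,0,0,-1,0,0; 0,1,0,0,-1,0; 0,0,1,0,0,-1; 0,0,0,1,0,0; 0,0,0,0,1,0; 0,0,0,0,0,1] :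
      Matrix (Fin 6) (Fin 6) ℝ) *
    (!![a-1, a, a, 0, a, a;
        b, b-1, b, b, 0, b;
        c, c, c-1, c, c, 0;
        0, a, a, a-1, a, a;
        b, 0, b, b, b-1, b;
        c, c, 0, c, c, c-1]) *
    (!![1,0,0,1,0,0; 0,1,0,0,1,0; 0,0,1,0,0,1; 0,0,0,1,0,0; 0,0,0,0,1,0; 0,0,0,0,0,1] :
      Matrix (Fin 6) (Fin 6) ℝ) =
    !![a-1,0,0,0,0,0; 0,b-1,0,0,0,0; 0,0,c-1,0,0,0;
       0,a,a,a-1,2*a,2*a; b,0,b,2*b,b-1,2*b; c,c,0,2*c,2*c,c-1] := by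
  ext i j
  fin_cases i <;> fin_cases j <;>
    simp [-Matrix.cons_mul, Matrix.mul_apply, Fin.sum_univ_six, cons_val_five',
      Matrix.vecHead, Matrix.vecTail] <;> ring

private lemma rose_det6_factor (a b c : ℝ) :
    Matrix.det
      (!![a, a, a, 0, a, a;
          b, b, b, b, 0, b;
          c, c, c, c, c, 0;
          0, a, a, a, a, a;
          b, 0, b, b, b, b;
          c, c, 0, c, c, c] -
        (1 : Matrix (Fin 6) (Fin 6) ℝ)) =
    -(((1 + 3*a + 3*b + 5*a*b) * c - (1 - a - b - 3*a*b)) * ((1-a)*(1-b)*(1-c))) := by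
  rw [rose_sub, ← rose_detT a b c, ← rose_prodEMF a b c, Matrix.det_mul, Matrix.det_mul,
    rose_detE, rose_detF, one_mul, mul_one]

theorem rose_entropy_one_condition (x y z : ℝ) (hx : 0 < x) (hy : 0 < y) (hz : 0 < z)
    (hdom : exp x + exp y + 3 < exp (x + y)) :
    Matrix.det
      (!![exp (-x), exp (-x), exp (-x), 0, exp (-x), exp (-x);
          exp (-y), exp (-y), exp (-y), exp (-y), 0, exp (-y);
          exp (-z), exp (-z), exp (-z), exp (-z), exp (-z), 0;
          0, exp (-x), exp (-x), exp (-x), exp (-x), exp (-x);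
          exp (-y), 0, exp (-y), exp (-y), exp (-y), exp (-y);
          exp (-z), exp (-z), 0, exp (-z), exp (-z), exp (-z)] -
        (1 : Matrix (Fin 6) (Fin 6) ℝ)) = 0 ↔
      exp (-z) = (exp (x + y) - exp x - exp y - 3) / (exp (x + y) + 3 * exp x + 3 * exp y + 5) := by
  rw [rose_det6_factor]
  set a := exp (-x) with ha
  set b := exp (-y) with hb
  set c := exp (-z) with hc
  have ha1 : a < 1 := by rw [ha]; exact exp_lt_one_iff.2 (by linarith)
  have hb1 : b < 1 := by rw [hb]; exact exp_lt_one_iff.2 (by linarith)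
  have hc1 : c < 1 := by rw [hc]; exact exp_lt_one_iff.2 (by linarith)
  have ha0 : 0 < a := exp_pos _
  have hb0 : 0 < b := exp_pos _
  have hc0 : 0 < c := exp_pos _
  have hden : (0:ℝ) < 1 + 3*a + 3*b + 5*a*b := by nlinarith
  have hE : (0:ℝ) < exp (x + y) + 3 * exp x + 3 * exp y + 5 := by
    have := exp_pos x; have := exp_pos y; have := exp_pos (x+y); linarith
  have hxe := exp_pos x
  have hye := exp_pos y
  have haeq : a = (exp x)⁻¹ := by rw [ha, exp_neg]
  have hbeq : b = (exp y)⁻¹ := by rw [hb, exp_neg]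
  have hxy : exp (x + y) = exp x * exp y := exp_add x y
  -- the target fraction equals (1 - a - b - 3ab)/(1 + 3a + 3b + 5ab)
  have hfrac : (exp (x + y) - exp x - exp y - 3) / (exp (x + y) + 3 * exp x + 3 * exp y + 5) =
      (1 - a - b - 3*a*b) / (1 + 3*a + 3*b + 5*a*b) := by
    rw [haeq, hbeq, hxy, div_eq_div_iff (by nlinarith) (by positivity)]
    field_simp
    ring
  rw [hfrac]
  constructor
  · intro h
    have h2 : (1 + 3*a + 3*b + 5*a*b) * c - (1 - a - b - 3*a*b) = 0 := by
      rcases mul_eq_zero.1 (neg_eq_zero.1 h) with h' | h'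
      · exact h'
      · exfalso
        have : (0:ℝ) < (1-a)*(1-b)*(1-c) := by
          have := mul_pos (by linarith : (0:ℝ) < 1-a) (by linarith : (0:ℝ) < 1-b)
          exact mul_pos this (by linarith : (0:ℝ) < 1-c)
        linarith
    rw [eq_div_iff (ne_of_gt hden)]
    linarith
  · intro h
    rw [h]
    have : (1 + 3*a + 3*b + 5*a*b) * ((1 - a - b - 3*a*b) / (1 + 3*a + 3*b + 5*a*b)) =
        1 - a - b - 3*a*b := by
      field_simp
    rw [this]
    ring
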